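/- (Prediction step with control input.) Let n, m ≥ 1, let x̂_c ∈ ℝⁿ, E ∈ ℝ^{n×n}, z ∈ ℝⁿ with ‖z‖ ≤ 1, set x = x̂_c + E z and γ = ‖E‖, and let u ∈ ℝᵐ be a known input. Let A₀ ∈ ℝ^{n×n}, K₂ ∈ ℝ^{n×n²}, R_A ∈ ℝ^{n×n} with ‖R_A‖ ≤ r_A; let B₀ ∈ ℝ^{n×m}, K₃ ∈ ℝ^{n×(nm)}, R_B ∈ ℝ^{n×m} with ‖R_B‖ ≤ r_B; and define Δ₂ = ((x − x̂_c) ⊗ Iₙ) ∈ ℝ^{n²×n} and Δ₃ = ((x − x̂_c) ⊗ Iₘ) ∈ ℝ^{(nm)×m}. Let w ∈ ℝⁿ and Q ∈ ℝ^{n×n} be positive definite with wᵀQ⁻¹w ≤ 1, and let the successor state be x⁺ = (A₀ + K₂Δ₂ + R_A)x + (B₀ + K₃Δ₃ + R_B)u + w; set the predicted estimate x̂⁺ = A₀ x̂_c + B₀ u. Suppose there exist a positive definite P⁺ ∈ ℝ^{n×n} and scalars τ₁,…,τ₈ ≥ 0 such that [[−P⁺, Π],[Πᵀ, −Ψ]]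 is negative semidefinite, where Π = [0ₙ, A₀E, Iₙ, K₂, Iₙ, K₂, Iₙ, K₃, Iₙ] (column blocks of widths 1, n, n, n², n, n², n, nm, n) and Ψ = diag(1 − τ₁ − τ₂ − τ₃γ²·x̂_cᵀx̂_c − τ₄·r_A²·x̂_cᵀx̂_c − τ₇γ²·uᵀu − τ₈·r_B²·uᵀu, τ₁Iₙ − τ₅γ²·EᵀE − τ₆·r_A²·EᵀE, τ₂Q⁻¹, τ₃I_{n²}, τ₄Iₙ, τ₅I_{n²}, τ₆Iₙ, τ₇I_{mn}, τ₈Iₙ). Then (x⁺ − x̂⁺)ᵀ (P⁺)⁻¹ (x⁺ − x̂⁺) ≤ 1, i.e., x⁺ belongs to the ellipsoid E(x̂⁺, P⁺). -/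

import Mathlib

open Matrix

/-- The spectral norm (largest singular value) of a real matrix, i.e. its operator norm
with respect to Euclidean vector norms. -/
noncomputable def matSpectralNorm {m n : Type*} [Fintype m] [Fintype n] [DecidableEq n]
    (M : Matrix m n ℝ) : ℝ :=
  ‖LinearMap.toContinuousLinearMap (Matrix.toEuclideanLin M)‖

/-- The Euclidean norm of a real vector. -/
noncomputable def euclNorm {n : Type*} [Fintype n] (v : n → ℝ) : ℝ :=
  Real.sqrt (∑ i, v i ^ 2)

/-- The Kronecker product `ξ ⊗ Iₘ` of a column vector `ξ ∈ ℝⁿ` with the `m × m`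
identity matrix, as an `nm × m` matrix. -/
def kronColId {n : Type*} (m : Type*) [DecidableEq m] (ξ : n → ℝ) : Matrix (n × m) m ℝ :=
  Matrix.of fun p j => ξ p.1 * (if p.2 = j then (1:ℝ) else 0)

/-- Index type for the stacked uncertainty vector of the prediction step with a control
input: column blocks of widths `1, n, n, n², n, n², n, nm, n`. -/
abbrev PredCtrlIdx (n m : ℕ) :=
  Unit ⊕ Fin n ⊕ Fin n ⊕ (Fin n × Fin n) ⊕ Fin n ⊕ (Fin n × Fin n) ⊕ Fin n ⊕
    (Fin n × Fin m) ⊕ Fin n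


lemma dot_self_nonneg' {ι : Type*} [Fintype ι] (v : ι → ℝ) : 0 ≤ v ⬝ᵥ v := by
  apply Finset.sum_nonneg; intro i _; exact mul_self_nonneg _

lemma dot_eq_norm_sq' {ι : Type*} [Fintype ι] (u : ι → ℝ) :
    u ⬝ᵥ u = ‖(WithLp.equiv 2 (ι → ℝ)).symm u‖ ^ 2 := by
  rw [EuclideanSpace.norm_eq, Real.sq_sqrt (by positivity)]
  simp [dotProduct, sq]

lemma mulVec_dot_le' {k l : Type*} [Fintype k] [Fintype l] [DecidableEq l]
    (M : Matrix k l ℝ) (v : l → ℝ) :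
    (M *ᵥ v) ⬝ᵥ (M *ᵥ v) ≤ matSpectralNorm M ^ 2 * (v ⬝ᵥ v) := by
  set L := LinearMap.toContinuousLinearMap (Matrix.toEuclideanLin M)
  have key : L ((WithLp.equiv 2 (l → ℝ)).symm v) = (WithLp.equiv 2 (k → ℝ)).symm (M *ᵥ v) := by
    simp [L, Matrix.toEuclideanLin_apply]
  have h1 := L.le_opNorm ((WithLp.equiv 2 (l → ℝ)).symm v)
  rw [key] at h1
  have h2 : ‖(WithLp.equiv 2 (k → ℝ)).symm (M *ᵥ v)‖ ^ 2
      ≤ (‖L‖ * ‖(WithLp.equiv 2 (l → ℝ)).symm v‖) ^ 2 :=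
    pow_le_pow_left₀ (norm_nonneg _) h1 2
  have e1 := dot_eq_norm_sq' (M *ᵥ v)
  have e2 := dot_eq_norm_sq' v
  rw [e1, e2, matSpectralNorm]
  calc _ ≤ (‖L‖ * ‖(WithLp.equiv 2 (l → ℝ)).symm v‖) ^ 2 := h2
    _ = _ := by ring

lemma kron_mulVec_dot' {n' m' : Type*} [Fintype n'] [Fintype m'] [DecidableEq m']
    (ξ : n' → ℝ) (v : m' → ℝ) :
    (kronColId m' ξ *ᵥ v) ⬝ᵥ (kronColId m' ξ *ᵥ v) = (ξ ⬝ᵥ ξ) * (v ⬝ᵥ v) := by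
  have h : ∀ p : n' × m', (kronColId m' ξ *ᵥ v) p = ξ p.1 * v p.2 := by
    intro p
    simp [kronColId, mulVec, dotProduct, mul_assoc, ite_mul]
  simp only [dotProduct, Fintype.sum_prod_type, h]
  rw [Finset.sum_mul]
  congr 1; funext i
  rw [Finset.mul_sum]
  congr 1; funext j
  ring

set_option maxHeartbeats 2000000 in
/-- **Prediction step of the SDC set-membership filter with a known control input
(Corollary 1).** If the LMI `[[−P⁺, Π], [Πᵀ, −Ψ]] ⪯ 0` is feasible with `P⁺ ≻ 0` and
multipliers `τ₁, …, τ₈ ≥ 0`, then the successor state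
`x⁺ = (A₀ + K₂ Δ₂ + R_A) x + (B₀ + K₃ Δ₃ + R_B) u + w` lies in the prediction
ellipsoid `E(x̂⁺, P⁺)`, where `x̂⁺ = A₀ x̂_c + B₀ u`. -/
theorem sdc_smf_prediction_step_with_control
    (n m : ℕ) (hn : 1 ≤ n) (hm : 1 ≤ m)
    (xhc : Fin n → ℝ) (E : Matrix (Fin n) (Fin n) ℝ)
    (z : Fin n → ℝ) (hz : euclNorm z ≤ 1)
    (x : Fin n → ℝ) (hx : x = xhc + E *ᵥ z)
    (u : Fin m → ℝ)
    (A₀ : Matrix (Fin n) (Fin n) ℝ) (K₂ : Matrix (Fin n) (Fin n × Fin n) ℝ)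
    (RA : Matrix (Fin n) (Fin n) ℝ) (rA : ℝ) (hRA : matSpectralNorm RA ≤ rA)
    (B₀ : Matrix (Fin n) (Fin m) ℝ) (K₃ : Matrix (Fin n) (Fin n × Fin m) ℝ)
    (RB : Matrix (Fin n) (Fin m) ℝ) (rB : ℝ) (hRB : matSpectralNorm RB ≤ rB)
    (Δ₂ : Matrix (Fin n × Fin n) (Fin n) ℝ) (hΔ₂ : Δ₂ = kronColId (Fin n) (x - xhc))
    (Δ₃ : Matrix (Fin n × Fin m) (Fin m) ℝ) (hΔ₃ : Δ₃ = kronColId (Fin m) (x - xhc))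
    (w : Fin n → ℝ) (Q : Matrix (Fin n) (Fin n) ℝ) (hQ : Q.PosDef)
    (hw : w ⬝ᵥ (Q⁻¹ *ᵥ w) ≤ 1)
    (xplus : Fin n → ℝ)
    (hxplus : xplus = (A₀ + K₂ * Δ₂ + RA) *ᵥ x + (B₀ + K₃ * Δ₃ + RB) *ᵥ u + w)
    (xhplus : Fin n → ℝ) (hxhplus : xhplus = A₀ *ᵥ xhc + B₀ *ᵥ u)
    (Pplus : Matrix (Fin n) (Fin n) ℝ) (hPplus : Pplus.PosDef)
    (τ₁ τ₂ τ₃ τ₄ τ₅ τ₆ τ₇ τ₈ : ℝ)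
    (hτ₁ : 0 ≤ τ₁) (hτ₂ : 0 ≤ τ₂) (hτ₃ : 0 ≤ τ₃) (hτ₄ : 0 ≤ τ₄)
    (hτ₅ : 0 ≤ τ₅) (hτ₆ : 0 ≤ τ₆) (hτ₇ : 0 ≤ τ₇) (hτ₈ : 0 ≤ τ₈)
    (PiM : Matrix (Fin n) (PredCtrlIdx n m) ℝ)
    (hPiM : PiM = Matrix.of fun i ζ =>
      match ζ with
      | Sum.inl _ => (0:ℝ)
      | Sum.inr (Sum.inl j) => (A₀ * E) i j
      | Sum.inr (Sum.inr (Sum.inl j)) => (1 : Matrix (Fin n) (Fin n) ℝ) i j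
      | Sum.inr (Sum.inr (Sum.inr (Sum.inl j))) => K₂ i j
      | Sum.inr (Sum.inr (Sum.inr (Sum.inr (Sum.inl j)))) =>
          (1 : Matrix (Fin n) (Fin n) ℝ) i j
      | Sum.inr (Sum.inr (Sum.inr (Sum.inr (Sum.inr (Sum.inl j))))) => K₂ i j
      | Sum.inr (Sum.inr (Sum.inr (Sum.inr (Sum.inr (Sum.inr (Sum.inl j)))))) =>
          (1 : Matrix (Fin n) (Fin n) ℝ) i j
      | Sum.inr (Sum.inr (Sum.inr (Sum.inr (Sum.inr (Sum.inr (Sum.inr (Sum.inl j))))))) =>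
          K₃ i j
      | Sum.inr (Sum.inr (Sum.inr (Sum.inr (Sum.inr (Sum.inr (Sum.inr (Sum.inr j))))))) =>
          (1 : Matrix (Fin n) (Fin n) ℝ) i j)
    (PsiM : Matrix (PredCtrlIdx n m) (PredCtrlIdx n m) ℝ)
    (hPsiM : PsiM = Matrix.of fun a b =>
      match a, b with
      | Sum.inl _, Sum.inl _ =>
          1 - τ₁ - τ₂ - τ₃ * matSpectralNorm E ^ 2 * (xhc ⬝ᵥ xhc)
            - τ₄ * rA ^ 2 * (xhc ⬝ᵥ xhc)
            - τ₇ * matSpectralNorm E ^ 2 * (u ⬝ᵥ u)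
            - τ₈ * rB ^ 2 * (u ⬝ᵥ u)
      | Sum.inr (Sum.inl i), Sum.inr (Sum.inl j) =>
          (τ₁ • (1 : Matrix (Fin n) (Fin n) ℝ)
            - (τ₅ * matSpectralNorm E ^ 2) • (Eᵀ * E)
            - (τ₆ * rA ^ 2) • (Eᵀ * E)) i j
      | Sum.inr (Sum.inr (Sum.inl i)), Sum.inr (Sum.inr (Sum.inl j)) =>
          (τ₂ • Q⁻¹) i j
      | Sum.inr (Sum.inr (Sum.inr (Sum.inl i))),
          Sum.inr (Sum.inr (Sum.inr (Sum.inl j))) =>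
          (τ₃ • (1 : Matrix (Fin n × Fin n) (Fin n × Fin n) ℝ)) i j
      | Sum.inr (Sum.inr (Sum.inr (Sum.inr (Sum.inl i)))),
          Sum.inr (Sum.inr (Sum.inr (Sum.inr (Sum.inl j)))) =>
          (τ₄ • (1 : Matrix (Fin n) (Fin n) ℝ)) i j
      | Sum.inr (Sum.inr (Sum.inr (Sum.inr (Sum.inr (Sum.inl i))))),
          Sum.inr (Sum.inr (Sum.inr (Sum.inr (Sum.inr (Sum.inl j))))) =>
          (τ₅ • (1 : Matrix (Fin n × Fin n) (Fin n × Fin n) ℝ)) i j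
      | Sum.inr (Sum.inr (Sum.inr (Sum.inr (Sum.inr (Sum.inr (Sum.inl i)))))),
          Sum.inr (Sum.inr (Sum.inr (Sum.inr (Sum.inr (Sum.inr (Sum.inl j)))))) =>
          (τ₆ • (1 : Matrix (Fin n) (Fin n) ℝ)) i j
      | Sum.inr (Sum.inr (Sum.inr (Sum.inr (Sum.inr (Sum.inr (Sum.inr (Sum.inl i))))))),
          Sum.inr (Sum.inr (Sum.inr (Sum.inr (Sum.inr (Sum.inr (Sum.inr (Sum.inl j))))))) =>
          (τ₇ • (1 : Matrix (Fin n × Fin m) (Fin n × Fin m) ℝ)) i j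
      | Sum.inr (Sum.inr (Sum.inr (Sum.inr (Sum.inr (Sum.inr (Sum.inr (Sum.inr i))))))),
          Sum.inr (Sum.inr (Sum.inr (Sum.inr (Sum.inr (Sum.inr (Sum.inr (Sum.inr j))))))) =>
          (τ₈ • (1 : Matrix (Fin n) (Fin n) ℝ)) i j
      | _, _ => (0:ℝ))
    (hLMI : (-(Matrix.fromBlocks (-Pplus) PiM PiMᵀ (-PsiM))).PosSemidef) :
    (xplus - xhplus) ⬝ᵥ (Pplus⁻¹ *ᵥ (xplus - xhplus)) ≤ 1 := by
  have hrA0 : 0 ≤ rA := le_trans (norm_nonneg _) hRA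
  have hrB0 : 0 ≤ rB := le_trans (norm_nonneg _) hRB
  have hγ0 : 0 ≤ matSpectralNorm E := norm_nonneg _
  set γ : ℝ := matSpectralNorm E with hγ
  set ξv : Fin n → ℝ := E *ᵥ z with hξv
  have hxsub : x - xhc = ξv := by rw [hx]; abel
  set d : Fin n → ℝ := xplus - xhplus with hd
  set a₃ : Fin n × Fin n → ℝ := Δ₂ *ᵥ xhc with ha₃
  set a₄ : Fin n → ℝ := RA *ᵥ xhc with ha₄
  set a₅ : Fin n × Fin n → ℝ := Δ₂ *ᵥ ξv with ha₅
  set a₆ : Fin n → ℝ := RA *ᵥ ξv with ha₆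
  set a₇ : Fin n × Fin m → ℝ := Δ₃ *ᵥ u with ha₇
  set a₈ : Fin n → ℝ := RB *ᵥ u with ha₈
  set ζ : PredCtrlIdx n m → ℝ :=
    Sum.elim (fun _ => (1:ℝ)) (Sum.elim z (Sum.elim w (Sum.elim a₃ (Sum.elim a₄
      (Sum.elim a₅ (Sum.elim a₆ (Sum.elim a₇ a₈))))))) with hζ
  -- Step 1 : Π ζ = d
  have hPid : PiM *ᵥ ζ = d := by
    have h1 : PiM *ᵥ ζ = (A₀ * E) *ᵥ z + w + K₂ *ᵥ a₃ + a₄ + K₂ *ᵥ a₅ + a₆ + K₃ *ᵥ a₇ + a₈ := by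
      funext i
      simp [hPiM, hζ, mulVec, dotProduct, Fintype.sum_sum_type, Matrix.one_apply,
        ite_mul, Finset.sum_ite_eq, Finset.mul_sum]
      ring
    rw [h1, hd, hxplus, hxhplus, hx, ha₃, ha₄, ha₅, ha₆, ha₇, ha₈, hξv]
    simp only [add_mulVec, mulVec_add, mulVec_mulVec, add_mul, Matrix.mul_assoc]
    abel
  -- Step 2 : ζᵀ Ψ ζ value
  have hΨval : ζ ⬝ᵥ (PsiM *ᵥ ζ) =
      (1 - τ₁ - τ₂ - τ₃ * γ ^ 2 * (xhc ⬝ᵥ xhc) - τ₄ * rA ^ 2 * (xhc ⬝ᵥ xhc)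
        - τ₇ * γ ^ 2 * (u ⬝ᵥ u) - τ₈ * rB ^ 2 * (u ⬝ᵥ u))
      + (τ₁ * (z ⬝ᵥ z) - τ₅ * γ ^ 2 * (ξv ⬝ᵥ ξv) - τ₆ * rA ^ 2 * (ξv ⬝ᵥ ξv))
      + τ₂ * (w ⬝ᵥ (Q⁻¹ *ᵥ w))
      + τ₃ * (a₃ ⬝ᵥ a₃) + τ₄ * (a₄ ⬝ᵥ a₄) + τ₅ * (a₅ ⬝ᵥ a₅)
      + τ₆ * (a₆ ⬝ᵥ a₆) + τ₇ * (a₇ ⬝ᵥ a₇) + τ₈ * (a₈ ⬝ᵥ a₈) := by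
    have h2 : ζ ⬝ᵥ (PsiM *ᵥ ζ) =
        (1 - τ₁ - τ₂ - τ₃ * γ ^ 2 * (xhc ⬝ᵥ xhc) - τ₄ * rA ^ 2 * (xhc ⬝ᵥ xhc)
          - τ₇ * γ ^ 2 * (u ⬝ᵥ u) - τ₈ * rB ^ 2 * (u ⬝ᵥ u))
        + z ⬝ᵥ ((τ₁ • (1 : Matrix (Fin n) (Fin n) ℝ)
            - (τ₅ * γ ^ 2) • (Eᵀ * E) - (τ₆ * rA ^ 2) • (Eᵀ * E)) *ᵥ z)
        + w ⬝ᵥ ((τ₂ • Q⁻¹) *ᵥ w)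
        + a₃ ⬝ᵥ ((τ₃ • (1 : Matrix (Fin n × Fin n) (Fin n × Fin n) ℝ)) *ᵥ a₃)
        + a₄ ⬝ᵥ ((τ₄ • (1 : Matrix (Fin n) (Fin n) ℝ)) *ᵥ a₄)
        + a₅ ⬝ᵥ ((τ₅ • (1 : Matrix (Fin n × Fin n) (Fin n × Fin n) ℝ)) *ᵥ a₅)
        + a₆ ⬝ᵥ ((τ₆ • (1 : Matrix (Fin n) (Fin n) ℝ)) *ᵥ a₆)
        + a₇ ⬝ᵥ ((τ₇ • (1 : Matrix (Fin n × Fin m) (Fin n × Fin m) ℝ)) *ᵥ a₇)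
        + a₈ ⬝ᵥ ((τ₈ • (1 : Matrix (Fin n) (Fin n) ℝ)) *ᵥ a₈) := by
      simp only [hPsiM, hζ, mulVec, dotProduct, Fintype.sum_sum_type, Sum.elim_inl,
        Sum.elim_inr, of_apply, mul_zero, zero_mul, Finset.sum_const_zero, add_zero,
        zero_add, mul_one, one_mul, Finset.univ_unique, Finset.sum_singleton]
      ring
    have e1 : z ⬝ᵥ ((τ₁ • (1 : Matrix (Fin n) (Fin n) ℝ)
        - (τ₅ * γ ^ 2) • (Eᵀ * E) - (τ₆ * rA ^ 2) • (Eᵀ * E)) *ᵥ z)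
        = τ₁ * (z ⬝ᵥ z) - τ₅ * γ ^ 2 * (ξv ⬝ᵥ ξv) - τ₆ * rA ^ 2 * (ξv ⬝ᵥ ξv) := by
      have hEz : z ⬝ᵥ ((Eᵀ * E) *ᵥ z) = ξv ⬝ᵥ ξv := by
        rw [hξv, ← mulVec_mulVec, mulVec_transpose, dotProduct_comm,
          ← dotProduct_mulVec]
      rw [sub_mulVec, sub_mulVec, dotProduct_sub, dotProduct_sub,
        smul_mulVec, smul_mulVec, smul_mulVec,
        dotProduct_smul, dotProduct_smul, dotProduct_smul, one_mulVec, hEz]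
      simp [smul_eq_mul]
    have eτ : ∀ {ι : Type} [Fintype ι] [DecidableEq ι] (τ : ℝ) (a : ι → ℝ),
        a ⬝ᵥ ((τ • (1 : Matrix ι ι ℝ)) *ᵥ a) = τ * (a ⬝ᵥ a) := by
      intro ι _ _ τ a
      rw [smul_mulVec, dotProduct_smul, one_mulVec, smul_eq_mul]
    have e2 : w ⬝ᵥ ((τ₂ • Q⁻¹) *ᵥ w) = τ₂ * (w ⬝ᵥ (Q⁻¹ *ᵥ w)) := by
      rw [smul_mulVec, dotProduct_smul, smul_eq_mul]
    rw [h2, e1, e2, eτ, eτ, eτ, eτ, eτ, eτ]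
  -- Step 3 : ζᵀ Ψ ζ ≤ 1
  have hΨle : ζ ⬝ᵥ (PsiM *ᵥ ζ) ≤ 1 := by
    have hzz : z ⬝ᵥ z ≤ 1 := by
      have h1 : z ⬝ᵥ z = euclNorm z ^ 2 := by
        rw [euclNorm, Real.sq_sqrt (by positivity)]
        simp [dotProduct, sq]
      rw [h1]
      exact pow_le_one₀ (Real.sqrt_nonneg _) hz
    have hX : 0 ≤ xhc ⬝ᵥ xhc := dot_self_nonneg' _
    have hU : 0 ≤ u ⬝ᵥ u := dot_self_nonneg' _
    have hs0 : 0 ≤ ξv ⬝ᵥ ξv := dot_self_nonneg' _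
    have hsle : ξv ⬝ᵥ ξv ≤ γ ^ 2 := by
      have := mulVec_dot_le' E z
      nlinarith [sq_nonneg γ]
    have hRA2 : matSpectralNorm RA ^ 2 ≤ rA ^ 2 := pow_le_pow_left₀ (norm_nonneg _) hRA 2
    have hRB2 : matSpectralNorm RB ^ 2 ≤ rB ^ 2 := pow_le_pow_left₀ (norm_nonneg _) hRB 2
    have h3 : a₃ ⬝ᵥ a₃ = (ξv ⬝ᵥ ξv) * (xhc ⬝ᵥ xhc) := by
      rw [ha₃, hΔ₂, hxsub, kron_mulVec_dot']
    have h4 : a₄ ⬝ᵥ a₄ ≤ rA ^ 2 * (xhc ⬝ᵥ xhc) := by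
      have := mulVec_dot_le' RA xhc
      nlinarith
    have h5 : a₅ ⬝ᵥ a₅ = (ξv ⬝ᵥ ξv) * (ξv ⬝ᵥ ξv) := by
      rw [ha₅, hΔ₂, hxsub, kron_mulVec_dot']
    have h6 : a₆ ⬝ᵥ a₆ ≤ rA ^ 2 * (ξv ⬝ᵥ ξv) := by
      have := mulVec_dot_le' RA ξv
      nlinarith
    have h7 : a₇ ⬝ᵥ a₇ = (ξv ⬝ᵥ ξv) * (u ⬝ᵥ u) := by
      rw [ha₇, hΔ₃, hxsub, kron_mulVec_dot']
    have h8 : a₈ ⬝ᵥ a₈ ≤ rB ^ 2 * (u ⬝ᵥ u) := by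
      have := mulVec_dot_le' RB u
      nlinarith
    rw [hΨval]
    nlinarith [mul_nonneg hτ₁ (sub_nonneg.2 hzz), mul_nonneg hτ₂ (sub_nonneg.2 hw),
      mul_nonneg hτ₃ (mul_nonneg (sub_nonneg.2 hsle) hX),
      mul_nonneg hτ₅ (mul_nonneg (sub_nonneg.2 hsle) hs0),
      mul_nonneg hτ₇ (mul_nonneg (sub_nonneg.2 hsle) hU),
      mul_nonneg hτ₄ (sub_nonneg.2 h4), mul_nonneg hτ₆ (sub_nonneg.2 h6),
      mul_nonneg hτ₈ (sub_nonneg.2 h8)]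
  -- Step 4 : use the LMI
  have hdet : IsUnit Pplus.det := hPplus.det_pos.ne'.isUnit
  set y : Fin n → ℝ := Pplus⁻¹ *ᵥ d with hy
  have hq := hLMI.dotProduct_mulVec_nonneg (Sum.elim y ζ)
  rw [Matrix.fromBlocks_neg, neg_neg, neg_neg, Matrix.fromBlocks_mulVec] at hq
  rw [Sum.elim_comp_inl, Sum.elim_comp_inr] at hq
  have hstar : star (Sum.elim y ζ) = Sum.elim y ζ := star_trivial _
  rw [hstar, sumElim_dotProduct_sumElim] at hq
  have hPy : Pplus *ᵥ y = d := by
    rw [hy, mulVec_mulVec, Matrix.mul_nonsing_inv _ hdet, one_mulVec]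
  have hyd : ζ ⬝ᵥ ((-PiMᵀ) *ᵥ y) = -(y ⬝ᵥ d) := by
    rw [neg_mulVec, dotProduct_neg, mulVec_transpose, dotProduct_comm,
      ← dotProduct_mulVec, hPid]
  rw [dotProduct_add, dotProduct_add, hyd, neg_mulVec, dotProduct_neg, hPid, hPy] at hq
  have hgoal : d ⬝ᵥ (Pplus⁻¹ *ᵥ d) = y ⬝ᵥ d := by
    rw [← hy, dotProduct_comm]
  show (xplus - xhplus) ⬝ᵥ (Pplus⁻¹ *ᵥ (xplus - xhplus)) ≤ 1
  rw [← hd, hgoal]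
  linarith [hq, hΨle]
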